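/- Let V and W be rational modules for a simply connected simple algebraic group G over an algebraically closed field of characteristic p > 0, and let v ∈ V ⊗ W be a weakly maximal vector (i.e., a nonzero weight vector annihilated by X_α for all positive roots α, where the hyperalgebra acts on the tensor product via the comultiplication Δ(X_α) = X_α ⊗ 1 + 1 ⊗ X_α). Suppose there exists a positive root α with (1 ⊗ X_α)·v ≠ 0, and let β be maximal among positive roots with (1 ⊗ X_β)·v ≠ 0. Then (1 ⊗ X_β)·v is a weakly maximal vector. -/

import Mathlib

/-!
Since `X_γ ⊗ 1` commutes with `1 ⊗ X_β` and `X_γ X_β = X_β X_γ + c X_{β+γ}`, we get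
`Δ(X_γ) (1 ⊗ X_β) v = (1 ⊗ X_β) Δ(X_γ) v + c (1 ⊗ X_{β+γ}) v`. The first term vanishes because
`v` is weakly maximal, the second by maximality of `β`, as `β + γ` lies strictly above `β`.
-/

open TensorProduct LinearMap

section Tensor

variable {k V W : Type*} [CommRing k] [AddCommGroup V] [Module k V] [AddCommGroup W] [Module k W]

theorem rTensor_mul_lTensor_eq (f : Module.End k V) (g : Module.End k W) :
    rTensor W f * lTensor V g = lTensor V g * rTensor W f :=
  (rTensor_comp_lTensor (M := V) (N := W) f g).trans
    (lTensor_comp_rTensor (M := V) (N := W) f g).symm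

theorem add_mul_lTensor_eq_of_mul_eq {f : Module.End k V} {g h e : Module.End k W} {c : k}
    (hc : g * h = h * g + c • e) :
    (rTensor W f + lTensor V g) * lTensor V h =
      lTensor V h * (rTensor W f + lTensor V g) + c • lTensor V e := by
  rw [add_mul, mul_add, ← lTensor_mul, hc, lTensor_add, lTensor_mul, lTensor_smul,
    rTensor_mul_lTensor_eq, add_assoc]

end Tensor

theorem Finset.exists_eq_sum_nsmul_of_mem {X : Type*} [AddCommMonoid X] {s : Finset X} {γ : X}
    (hγ : γ ∈ s) : ∃ c : X → ℕ, γ = ∑ η ∈ s, c η • η := by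
  classical
  refine ⟨fun η => if η = γ then 1 else 0, ?_⟩
  simp [ite_smul, Finset.sum_ite_eq', hγ]

theorem stmt3_general (k V W X : Type*) [Field k]
    [AddCommGroup V] [Module k V] [AddCommGroup W] [Module k W]
    [AddCommGroup X]
    (Φpos : Finset X) (hΦ0 : (0 : X) ∉ Φpos)
    (XV : X → Module.End k V) (XW : X → Module.End k W)
    (hXW0 : ∀ δ : X, δ ∉ Φpos → XW δ = 0)
    (hcommW : ∀ γ ∈ Φpos, ∀ β ∈ Φpos, ∃ c : k, XW γ * XW β = XW β * XW γ + c • XW (β + γ))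
    (wt : X → Submodule k (V ⊗[k] W))
    (hwt : ∀ γ ∈ Φpos, ∀ χ : X, ∀ x ∈ wt χ, lTensor V (XW γ) x ∈ wt (χ + γ))
    (v : V ⊗[k] W) (δ : X) (hvwt : v ∈ wt δ)
    (hvmax : ∀ γ ∈ Φpos, (rTensor W (XV γ) + lTensor V (XW γ)) v = 0)
    (β : X) (hβ : β ∈ Φpos) (hβv : lTensor V (XW β) v ≠ 0)
    (hβmax : ∀ γ ∈ Φpos, (∃ c : X → ℕ, γ - β = ∑ η ∈ Φpos, c η • η) → γ ≠ β →
      lTensor V (XW γ) v = 0) :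
    lTensor V (XW β) v ≠ 0 ∧ lTensor V (XW β) v ∈ wt (δ + β) ∧
      ∀ γ ∈ Φpos, (rTensor W (XV γ) + lTensor V (XW γ)) (lTensor V (XW β) v) = 0 := by
  refine ⟨hβv, hwt β hβ δ v hvwt, fun γ hγ => ?_⟩
  obtain ⟨c, hc⟩ := hcommW γ hγ β hβ
  have hβγ : lTensor V (XW (β + γ)) v = 0 := by
    by_cases h : β + γ ∈ Φpos
    · refine hβmax _ h ?_ fun he => hΦ0 ?_
      · rw [add_sub_cancel_left]
        exact Finset.exists_eq_sum_nsmul_of_mem hγ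
      · rwa [← add_eq_left.mp he]
    · simp [hXW0 _ h]
  rw [← Module.End.mul_apply, add_mul_lTensor_eq_of_mul_eq hc, LinearMap.add_apply,
    Module.End.mul_apply, hvmax γ hγ, LinearMap.smul_apply, hβγ, map_zero, smul_zero, add_zero]

/-- Let `V`, `W` be rational modules for a simply connected simple
algebraic group in characteristic `p > 0`, viewed as modules for the hyperalgebra: `XV γ`
(resp. `XW γ`) is the action of the Chevalley generator `X_γ` on `V` (resp. `W`) for
`γ ∈ Φ⁺` (with the convention `X_δ = 0` for `δ ∉ Φ⁺`), satisfying the Chevalley relation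
`X_γ X_β = X_β X_γ + c • X_{β+γ}`.  The hyperalgebra acts on `V ⊗ W` through the
comultiplication `Δ(X_γ) = X_γ ⊗ 1 + 1 ⊗ X_γ`, i.e. by `rTensor W (XV γ) + lTensor V (XW γ)`,
and `wt χ` denotes the `χ`-weight space of `V ⊗ W`.  If `v` is a weakly maximal vector (a
nonzero weight vector killed by `Δ(X_γ)` for all `γ ∈ Φ⁺`) of weight `δ`, and `β ∈ Φ⁺` is
maximal (for the dominance order determined by `Φ⁺`) such that `(1 ⊗ X_β)·v ≠ 0`, then
`(1 ⊗ X_β)·v` is a weakly maximal vector (of weight `δ + β`). -/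
theorem stmt3 (k V W X : Type*) [Field k] (p : ℕ) [CharP k p] (hp : 0 < p)
    [AddCommGroup V] [Module k V] [AddCommGroup W] [Module k W]
    [AddCommGroup X]
    (Φpos : Finset X) (hΦ0 : (0 : X) ∉ Φpos)
    (XV : X → Module.End k V) (XW : X → Module.End k W)
    (hXV0 : ∀ δ : X, δ ∉ Φpos → XV δ = 0) (hXW0 : ∀ δ : X, δ ∉ Φpos → XW δ = 0)
    (hcommV : ∀ γ ∈ Φpos, ∀ β ∈ Φpos, ∃ c : k, XV γ * XV β = XV β * XV γ + c • XV (β + γ))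
    (hcommW : ∀ γ ∈ Φpos, ∀ β ∈ Φpos, ∃ c : k, XW γ * XW β = XW β * XW γ + c • XW (β + γ))
    (wt : X → Submodule k (V ⊗[k] W))
    (hwt : ∀ γ ∈ Φpos, ∀ χ : X, ∀ x ∈ wt χ, lTensor V (XW γ) x ∈ wt (χ + γ))
    (v : V ⊗[k] W) (δ : X) (hv0 : v ≠ 0) (hvwt : v ∈ wt δ)
    (hvmax : ∀ γ ∈ Φpos, (rTensor W (XV γ) + lTensor V (XW γ)) v = 0)
    (β : X) (hβ : β ∈ Φpos) (hβv : lTensor V (XW β) v ≠ 0)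
    (hβmax : ∀ γ ∈ Φpos, (∃ c : X → ℕ, γ - β = ∑ η ∈ Φpos, c η • η) → γ ≠ β →
      lTensor V (XW γ) v = 0) :
    lTensor V (XW β) v ≠ 0 ∧ lTensor V (XW β) v ∈ wt (δ + β) ∧
      ∀ γ ∈ Φpos, (rTensor W (XV γ) + lTensor V (XW γ)) (lTensor V (XW β) v) = 0 :=
  stmt3_general k V W X Φpos hΦ0 XV XW hXW0 hcommW wt hwt v δ hvwt hvmax β hβ hβv hβmax
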